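/- arXiv:2212.03820 — 8 statements merged into one kernel-verified Lean document; each statement's English description precedes it below -/
import Mathlib

section
/- Let A, B be n×n complex matrices with A B* = B A* and rank(A,B) = n, and assume every set of rank(B)-many distinct columns of B is linearly independent. Set r = rank B. Then there exist an invertible n×n matrix Q, an n×n permutation matrix P, a complex (n−r)×r matrix A₁ and a Hermitian r×r matrix A₂ such that Q·A·P = [[I_{n−r}, A₁],[0, A₂]] and Q·B·P = [[0, 0],[−A₁*, I_r]] in block form with respect to ℂ^n = ℂ^{n−r} × ℂ^r. -/
/-!
Let `W` be the column space of `B`, of dimension `r`. The columns of `A` and `B` together span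
`ℂⁿ`, so the images of the columns of `A` span `ℂⁿ ⧸ W`, and some `n - r` of them, indexed by `T`,
form a basis of it. The `r` columns of `B` indexed by the complement of `T` are independent by
hypothesis, hence a basis of `W`, so together with the chosen columns of `A` they form a basis of
`ℂⁿ`. Take `Q` to be the inverse of the matrix of this basis and `P` the permutation moving `T` to
the front. Then `Q A P` and `Q B P` contain the identity columns, and the remaining columns of `B`
lie in `W`, so the top left block of `Q B P` vanishes. Finally `A Bᴴ = B Aᴴ` is preserved by
`(A, B) ↦ (Q A P, Q B P)` as `P` is a permutation, and on the block forms it says exactly that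
`A₂` is Hermitian and the lower left block of `Q B P` is `-A₁ᴴ`.
-/

open Matrix Submodule Module

section ColumnSelection

variable {K V ι : Type*} [Field K] [AddCommGroup V] [Module K V]

theorem linearIndependent_comp_of_forall_card_eq {k : ℕ} {v : ι → V}
    (hv : ∀ s : Finset ι, s.card = k → LinearIndependent K fun j : s => v j)
    {κ : Type*} [Fintype κ] {c : κ → ι} (hc : Function.Injective c) (hκ : Fintype.card κ = k) :
    LinearIndependent K (v ∘ c) :=
  (hv (Finset.univ.map ⟨c, hc⟩) (by simp [hκ])).comp (fun x => ⟨c x, by simp⟩)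
    fun _ _ hxy => hc (congrArg Subtype.val hxy)

variable [FiniteDimensional K V]

theorem span_range_comp_eq_of_forall_card_eq {k : ℕ} {v : ι → V}
    (hv : ∀ s : Finset ι, s.card = k → LinearIndependent K fun j : s => v j)
    (hk : finrank K (span K (Set.range v)) = k)
    {κ : Type*} [Fintype κ] {c : κ → ι} (hc : Function.Injective c) (hκ : Fintype.card κ = k) :
    span K (Set.range (v ∘ c)) = span K (Set.range v) :=
  eq_of_le_of_finrank_eq (span_mono (Set.range_comp_subset_range c v)) <| by
    rw [finrank_span_eq_card (linearIndependent_comp_of_forall_card_eq hv hc hκ), hκ, hk]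

theorem exists_equiv_linearIndependent_sumElim [Fintype ι] {m r : Type*} [Fintype m] [Fintype r]
    (a b : ι → V) (hspan : span K (Set.range a) ⊔ span K (Set.range b) = ⊤)
    (hb : ∀ s : Finset ι, s.card = Fintype.card r → LinearIndependent K fun j : s => b j)
    (hbr : finrank K (span K (Set.range b)) = Fintype.card r)
    (hmr : Fintype.card m + Fintype.card r = finrank K V)
    (hι : Fintype.card ι = finrank K V) :
    ∃ g : m ⊕ r ≃ ι, LinearIndependent K (Sum.elim (a ∘ g ∘ Sum.inl) (b ∘ g ∘ Sum.inr)) := by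
  classical
  set W := span K (Set.range b)
  obtain ⟨T, -, -, hTspan, hTli⟩ := exists_linearIndepOn_extension (v := W.mkQ ∘ a)
    (linearIndepOn_empty K _) (Set.empty_subset Set.univ)
  have hTtop : span K (Set.range fun j : T => (W.mkQ ∘ a) j) = ⊤ := by
    rw [← Set.image_eq_range, eq_top_iff, ← (map_mkQ_eq_top W _).2 (sup_comm W _ ▸ hspan),
      map_span, ← Set.range_comp, ← Set.image_univ]
    exact span_le.2 hTspan
  have hTcard : Fintype.card T = Fintype.card m := by
    have := W.finrank_quotient_add_finrank
    rw [finrank_eq_card_basis (Basis.mk hTli hTtop.ge)] at this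
    omega
  have hTccard : Fintype.card {j // j ∉ T} = Fintype.card r := by
    rw [Fintype.card_subtype_compl, hTcard]
    omega
  let g : m ⊕ r ≃ ι := ((Fintype.equivOfCardEq hTcard).symm.sumCongr
    (Fintype.equivOfCardEq hTccard).symm).trans (Equiv.sumCompl (· ∈ T))
  have hbg : LinearIndependent K (b ∘ g ∘ Sum.inr) :=
    linearIndependent_comp_of_forall_card_eq hb (g.injective.comp Sum.inr_injective) rfl
  have hag : LinearIndependent K (W.mkQ ∘ a ∘ g ∘ Sum.inl) :=
    hTli.comp _ (Fintype.equivOfCardEq hTcard).symm.injective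
  have hba := LinearIndependent.sumElim_of_quotient
    (f := fun k => (⟨b (g (Sum.inr k)), subset_span ⟨_, rfl⟩⟩ : W)) (hbg.of_comp W.subtype) _ hag
  exact ⟨g, Sum.elim_swap ▸ hba.comp Sum.swap Sum.swap_leftInverse.injective⟩

end ColumnSelection

section BlockForm

variable {R ι o m r : Type*}

theorem col_fromCols {μ ν : Type*} (A : Matrix ι μ R) (B : Matrix ι ν R) :
    (fromCols A B).col = Sum.elim A.col B.col := by
  ext (j | j) i <;> rfl

theorem span_col_sup_span_col_eq_top_of_rank_fromCols {K μ ν : Type*} [Field K] [Fintype ι]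
    [Fintype μ] [Fintype ν] {A : Matrix ι μ K} {B : Matrix ι ν K}
    (h : (fromCols A B).rank = Fintype.card ι) :
    span K (Set.range A.col) ⊔ span K (Set.range B.col) = ⊤ := by
  rw [rank_eq_finrank_span_cols, col_fromCols, Set.Sum.elim_range, span_union] at h
  exact eq_top_of_finrank_eq (h.trans (finrank_fintype_fun_eq_card K).symm)

theorem exists_mul_eq_of_col_mem_span [CommSemiring R] [Fintype o] {μ : Type*}
    (X : Matrix ι o R) (Y : Matrix ι μ R) (h : ∀ j, Y.col j ∈ span R (Set.range X.col)) :
    ∃ C : Matrix o μ R, X * C = Y := by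
  simp_rw [← range_mulVecLin, LinearMap.mem_range] at h
  choose x hx using h
  exact ⟨of fun k j => x j k, ext fun i j => congrFun (hx j) i⟩

theorem exists_isUnit_submatrix_mul_eq_one {K : Type*} [Field K] [Fintype ι] [DecidableEq ι]
    [DecidableEq o] (M : Matrix ι o K) (hM : LinearIndependent K M.col) (e : ι ≃ o) :
    ∃ Q : Matrix ι ι K, IsUnit Q ∧ Q.submatrix e.symm id * M = 1 := by
  have hMe : IsUnit (M.submatrix id e) :=
    linearIndependent_cols_iff_isUnit.1 (hM.comp e e.injective)
  refine ⟨(M.submatrix id e)⁻¹, isUnit_nonsing_inv_iff.2 hMe, ?_⟩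
  have := submatrix_mul (M.submatrix id e)⁻¹ (M.submatrix id e) e.symm id e.symm
    Function.bijective_id
  rw [nonsing_inv_mul _ ((isUnit_iff_isUnit_det _).1 hMe), submatrix_one_equiv,
    submatrix_submatrix] at this
  simpa using this.symm

theorem mul_eq_fromBlocks_of_mul_fromCols_eq_one [Ring R] [Fintype ι] [Fintype r]
    [DecidableEq m] [DecidableEq r] {Q : Matrix (m ⊕ r) ι R} {A B : Matrix ι (m ⊕ r) R}
    (hQ : Q * fromCols A.toCols₁ B.toCols₂ = 1) {C : Matrix r m R}
    (hC : B.toCols₂ * C = B.toCols₁) :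
    (∃ A₁ A₂, Q * A = fromBlocks 1 A₁ 0 A₂) ∧ Q * B = fromBlocks 0 0 C 1 := by
  rw [mul_fromCols, ← fromBlocks_one, ← fromCols_fromRows_eq_fromBlocks] at hQ
  obtain ⟨hQA, hQB⟩ := fromCols_inj hQ
  refine ⟨⟨(Q * A.toCols₂).toRows₁, (Q * A.toCols₂).toRows₂, ?_⟩, ?_⟩
  · nth_rewrite 1 [← fromCols_toCols A]
    rw [mul_fromCols, hQA, ← fromCols_fromRows_eq_fromBlocks, fromRows_toRows]
  · nth_rewrite 1 [← fromCols_toCols B]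
    rw [mul_fromCols, ← hC, ← Matrix.mul_assoc, hQB, fromRows_mul,
      ← fromCols_fromRows_eq_fromBlocks]
    simp

theorem mul_submatrix_mul_conjTranspose_comm [Semiring R] [StarRing R] [Fintype ι] [Fintype o]
    (Q : Matrix o ι R) (A B : Matrix ι ι R) (g : o ≃ ι) (h : A * Bᴴ = B * Aᴴ) :
    Q * A.submatrix id g * (Q * B.submatrix id g)ᴴ =
      Q * B.submatrix id g * (Q * A.submatrix id g)ᴴ := by
  have hcongr : ∀ X Y : Matrix ι ι R,
      Q * X.submatrix id g * (Q * Y.submatrix id g)ᴴ = Q * (X * Yᴴ) * Qᴴ := fun X Y => by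
    rw [conjTranspose_mul, conjTranspose_submatrix, Matrix.mul_assoc,
      ← Matrix.mul_assoc (X.submatrix id g), submatrix_mul_equiv, submatrix_id_id]
    simp only [Matrix.mul_assoc]
  rw [hcongr, hcongr, h]

theorem fromBlocks_mul_conjTranspose_comm_iff [Ring R] [StarRing R]
    [Fintype m] [Fintype r] [DecidableEq m] [DecidableEq r]
    {A₁ : Matrix m r R} {A₂ : Matrix r r R} {Z : Matrix r m R} :
    (fromBlocks 1 A₁ 0 A₂ : Matrix (m ⊕ r) (m ⊕ r) R) * (fromBlocks 0 0 Z 1)ᴴ =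
      fromBlocks 0 0 Z 1 * (fromBlocks 1 A₁ 0 A₂)ᴴ ↔ A₂.IsHermitian ∧ Z = -A₁ᴴ := by
  rw [fromBlocks_conjTranspose, fromBlocks_conjTranspose, fromBlocks_multiply,
    fromBlocks_multiply]
  simp only [conjTranspose_zero, conjTranspose_one, Matrix.mul_zero, Matrix.zero_mul,
    Matrix.one_mul, Matrix.mul_one, add_zero, zero_add, fromBlocks_inj, true_and]
  constructor
  · rintro ⟨hZA, -, hA₂⟩
    exact ⟨hA₂.symm, by rw [eq_neg_of_add_eq_zero_right hZA, conjTranspose_neg,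
      conjTranspose_conjTranspose, neg_neg]⟩
  · rintro ⟨hA₂, rfl⟩
    simp [hA₂.eq]

theorem reindex_mul_mul_permMatrix [NonAssocSemiring R] [Fintype ι] [DecidableEq ι]
    (Q A : Matrix ι ι R) (e : ι ≃ o) (g : o ≃ ι) :
    reindex e e (Q * A * Equiv.Perm.permMatrix R (e.trans g).symm) =
      Q.submatrix e.symm id * A.submatrix id g := by
  rw [Equiv.Perm.permMatrix, PEquiv.mul_toMatrix_toPEquiv, reindex_apply, submatrix_submatrix,
    submatrix_mul _ _ _ id _ Function.bijective_id]
  simp [Function.comp_assoc]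

end BlockForm

theorem stmt6 (n : ℕ) (A B : Matrix (Fin n) (Fin n) ℂ)
    (hAB : A * Bᴴ = B * Aᴴ) (hfull : (Matrix.fromCols A B).rank = n)
    (hcols : ∀ s : Finset (Fin n), s.card = B.rank →
      LinearIndependent ℂ (fun j : s => B.transpose (j : Fin n)))
    (h : n - B.rank + B.rank = n) :
    ∃ (Q P : Matrix (Fin n) (Fin n) ℂ)
      (A₁ : Matrix (Fin (n - B.rank)) (Fin B.rank) ℂ)
      (A₂ : Matrix (Fin B.rank) (Fin B.rank) ℂ),
      IsUnit Q ∧ (∃ σ : Equiv.Perm (Fin n), P = σ.permMatrix ℂ) ∧ A₂ᴴ = A₂ ∧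
      Matrix.reindex ((finCongr h.symm).trans finSumFinEquiv.symm)
          ((finCongr h.symm).trans finSumFinEquiv.symm) (Q * A * P) =
        Matrix.fromBlocks 1 A₁ 0 A₂ ∧
      Matrix.reindex ((finCongr h.symm).trans finSumFinEquiv.symm)
          ((finCongr h.symm).trans finSumFinEquiv.symm) (Q * B * P) =
        Matrix.fromBlocks 0 0 (-A₁ᴴ) 1 := by
  have hcols' : ∀ s : Finset (Fin n), s.card = Fintype.card (Fin B.rank) →
      LinearIndependent ℂ fun j : s => B.col j := fun s hs => hcols s (by simpa using hs)
  have hrank : finrank ℂ (span ℂ (Set.range B.col)) = Fintype.card (Fin B.rank) := by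
    rw [Fintype.card_fin, rank_eq_finrank_span_cols]
  obtain ⟨g, hg⟩ := exists_equiv_linearIndependent_sumElim (m := Fin (n - B.rank)) A.col B.col
    (span_col_sup_span_col_eq_top_of_rank_fromCols (by simpa using hfull)) hcols' hrank
    (by simpa using h) (by simp)
  set e := (finCongr h.symm).trans finSumFinEquiv.symm
  obtain ⟨Q, hQ, hQM⟩ := exists_isUnit_submatrix_mul_eq_one
    (fromCols (A.submatrix id g).toCols₁ (B.submatrix id g).toCols₂)
    (by rw [col_fromCols]; exact hg) e
  obtain ⟨C, hC⟩ := exists_mul_eq_of_col_mem_span (B.submatrix id g).toCols₂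
    (B.submatrix id g).toCols₁ fun j => by
      change B.col (g (Sum.inl j)) ∈ span ℂ (Set.range (B.col ∘ g ∘ Sum.inr))
      rw [span_range_comp_eq_of_forall_card_eq hcols' hrank
        (g.injective.comp Sum.inr_injective) rfl]
      exact subset_span ⟨_, rfl⟩
  obtain ⟨⟨A₁, A₂, hA⟩, hB⟩ := mul_eq_fromBlocks_of_mul_fromCols_eq_one hQM hC
  have hsym := mul_submatrix_mul_conjTranspose_comm (Q.submatrix e.symm id) A B g hAB
  rw [hA, hB] at hsym
  obtain ⟨hA₂, rfl⟩ := fromBlocks_mul_conjTranspose_comm_iff.1 hsym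
  exact ⟨Q, _, A₁, A₂, hQ, ⟨_, rfl⟩, hA₂, by rw [reindex_mul_mul_permMatrix, hA],
    by rw [reindex_mul_mul_permMatrix, hB]⟩
end

section
/- Let B₁ be an r×(n−r) complex matrix with r < n, and let B be the n×n block matrix [[0,0],[B₁, I_r]]. Then every set of r distinct columns of B is linearly independent if and only if all minors of B₁ (of every size k ≤ min{n−r, r}) are nonzero. -/
/-!
Dropping the zero rows, the columns of `B` are those of `[B₁ | I_r]`. For a set `s` of columns,
restricting to the rows `q` whose unit vector `e_q` is not in `s` kills exactly the span of the
unit vectors in `s`, so the columns in `s` are independent iff the columns of `B₁` indexed by `s`,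
restricted to those rows, are. When `|s| = r` this submatrix of `B₁` is square, and every square
submatrix of `B₁` arises from exactly one such `s`.
-/

open Matrix Function Finset

theorem linearIndependent_sumElim_iff_of_ker_eq_span {R M N ν μ : Type*} [Ring R]
    [AddCommGroup M] [AddCommGroup N] [Module R M] [Module R N] {v : ν → M} {w : μ → M}
    (hw : LinearIndependent R w) (π : M →ₗ[R] N)
    (hπ : LinearMap.ker π = Submodule.span R (Set.range w)) :
    LinearIndependent R (Sum.elim v w) ↔ LinearIndependent R (π ∘ v) := by
  rw [linearIndependent_sum, Sum.elim_comp_inl, Sum.elim_comp_inr, ← hπ]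
  exact ⟨fun ⟨hv, _, hdisj⟩ => hv.map hdisj,
    fun h => ⟨h.of_comp, hw, Submodule.range_ker_disjoint h⟩⟩

theorem ker_funLeft_subtype_eq_span_single {R ι : Type*} [Semiring R] [Finite ι]
    [DecidableEq ι] (P : ι → Prop) :
    LinearMap.ker (LinearMap.funLeft R R (Subtype.val : {i // ¬ P i} → ι)) =
      Submodule.span R (Set.range fun i : {i // P i} => Pi.single (i : ι) (1 : R)) := by
  have hrange : Set.range (fun i : {i // P i} => Pi.single (i : ι) (1 : R)) =
      Pi.basisFun R ι '' {i | P i} := by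
    ext; simp [Pi.basisFun_apply]
  ext v
  rw [hrange, (Pi.basisFun R ι).mem_span_image, LinearMap.mem_ker]
  simp [funext_iff, Set.subset_def, LinearMap.funLeft_apply, not_imp_comm]

namespace Matrix

theorem linearIndependent_col_submatrix_equiv_iff {R l m n m' : Type*} [Semiring R]
    (A : Matrix m n R) (e₁ : m' ≃ m) (e₂ : l ≃ n) :
    LinearIndependent R (A.submatrix e₁ e₂).col ↔ LinearIndependent R A.col := by
  have hcol : (A.submatrix e₁ e₂).col = LinearEquiv.funCongrLeft R R e₁ ∘ A.col ∘ e₂ := rfl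
  rw [hcol, ← linearIndependent_equiv e₂ (f := A.col)]
  exact (LinearEquiv.funCongrLeft R R e₁).toLinearMap.linearIndependent_iff_of_injOn
    (LinearEquiv.injective _).injOn

theorem linearIndependent_col_fromRows_zero_comp_iff {R l m n τ : Type*} [Semiring R]
    (A : Matrix m n R) (c : τ → n) :
    LinearIndependent R ((fromRows (0 : Matrix l n R) A).col ∘ c) ↔
      LinearIndependent R (A.col ∘ c) := by
  let L := (LinearEquiv.sumArrowLequivProdArrow l m R R).symm.toLinearMap ∘ₗ
    LinearMap.inr R (l → R) (m → R)
  have hL : Injective L := by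
    rw [LinearMap.coe_comp]
    exact (LinearEquiv.injective _).comp LinearMap.inr_injective
  have hcol : (fromRows (0 : Matrix l n R) A).col ∘ c = L ∘ A.col ∘ c := by
    ext j (i | i) <;> rfl
  rw [hcol]
  exact L.linearIndependent_iff_of_injOn hL.injOn

theorem det_submatrix_ne_zero_iff_linearIndependent_col {K l m n : Type*} [Field K] [Fintype l]
    [DecidableEq l] (A : Matrix m n K) (e₁ : l ≃ m) (e₂ : l ≃ n) :
    (A.submatrix e₁ e₂).det ≠ 0 ↔ LinearIndependent K A.col := by
  rw [← linearIndependent_col_submatrix_equiv_iff A e₁ e₂, linearIndependent_cols_iff_isUnit,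
    isUnit_iff_isUnit_det, isUnit_iff_ne_zero]

theorem linearIndependent_col_fromCols_one_iff {K m n : Type*} [Ring K] [Fintype m]
    [DecidableEq m] (A : Matrix m n K) (s : Finset (n ⊕ m)) :
    LinearIndependent K (fun j : s => (fromCols A 1).col (j : n ⊕ m)) ↔
      LinearIndependent K (A.submatrix (fun p : {p // Sum.inr p ∉ s} => p.1)
        (fun a : {a // Sum.inl a ∈ s} => a.1)).col := by
  rw [← linearIndependent_equiv Equiv.subtypeSum.symm]
  have hsplit : (fun j : s => (fromCols A 1).col (j : n ⊕ m)) ∘ Equiv.subtypeSum.symm =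
      Sum.elim (fun a : {a // Sum.inl a ∈ s} => A.col a)
        (fun q : {q // Sum.inr q ∈ s} => Pi.single q.1 1) := by
    ext (a | q) p <;> simp [Equiv.subtypeSum, one_eq_pi_single, Pi.single_apply, eq_comm]
  rw [hsplit, linearIndependent_sumElim_iff_of_ker_eq_span _ (LinearMap.funLeft K K Subtype.val)
    (ker_funLeft_subtype_eq_span_single _)]
  · rfl
  · exact (Pi.linearIndependent_single_one m K).comp _ Subtype.val_injective

theorem forall_card_eq_linearIndependent_col_iff_forall_det_ne_zero {K m n : Type*} [Field K]
    [Fintype m] [Fintype n] [DecidableEq m] [DecidableEq n] (A : Matrix m n K) :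
    (∀ s : Finset (n ⊕ m), #s = Fintype.card m →
      LinearIndependent K (A.submatrix (fun p : {p // Sum.inr p ∉ s} => p.1)
        (fun a : {a // Sum.inl a ∈ s} => a.1)).col) ↔
    ∀ (k : ℕ) (f : Fin k → m) (g : Fin k → n),
      Injective f → Injective g → (A.submatrix f g).det ≠ 0 := by
  constructor
  · intro h k f g hf hg
    let s : Finset (n ⊕ m) := (univ.image g).disjSum (univ.image f)ᶜ
    have hk : k ≤ Fintype.card m := by simpa using Fintype.card_le_of_injective f hf
    have hs : #s = Fintype.card m := by
      simp only [s, card_disjSum, card_compl, card_image_of_injective _ hf,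
        card_image_of_injective _ hg, card_univ, Fintype.card_fin]
      omega
    let e₁ : Fin k ≃ {p // Sum.inr p ∉ s} :=
      (Equiv.ofInjective f hf).trans (Equiv.subtypeEquivRight (by simp [s]))
    let e₂ : Fin k ≃ {a // Sum.inl a ∈ s} :=
      (Equiv.ofInjective g hg).trans (Equiv.subtypeEquivRight (by simp [s]))
    exact (det_submatrix_ne_zero_iff_linearIndependent_col _ e₁ e₂).2 (h s hs)
  · intro h s hs
    have hcard : Fintype.card {a // Sum.inl a ∈ s} = Fintype.card {p // Sum.inr p ∉ s} := by
      have hsplit := Fintype.card_congr (Equiv.subtypeSum (p := (· ∈ s)))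
      rw [Fintype.card_sum, Fintype.card_coe, hs] at hsplit
      rw [Fintype.card_subtype_compl]
      omega
    let e₂ := (Fintype.equivFin {a // Sum.inl a ∈ s}).symm
    let e₁ := (Fintype.equivFinOfCardEq hcard.symm).symm
    exact (det_submatrix_ne_zero_iff_linearIndependent_col _ e₁ e₂).1
      (h _ _ _ (Subtype.val_injective.comp e₁.injective) (Subtype.val_injective.comp e₂.injective))

end Matrix

theorem stmt7_general (n r : ℕ) (B₁ : Matrix (Fin r) (Fin (n - r)) ℂ) :
    (∀ s : Finset (Fin (n - r) ⊕ Fin r), s.card = r →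
      LinearIndependent ℂ (fun j : s =>
        (Matrix.fromBlocks (0 : Matrix (Fin (n - r)) (Fin (n - r)) ℂ) 0 B₁ 1).transpose
          (j : Fin (n - r) ⊕ Fin r))) ↔
    (∀ (k : ℕ) (f : Fin k → Fin r) (g : Fin k → Fin (n - r)),
      Function.Injective f → Function.Injective g → (B₁.submatrix f g).det ≠ 0) := by
  have hB : fromBlocks (0 : Matrix (Fin (n - r)) (Fin (n - r)) ℂ) 0 B₁ 1 =
      fromRows 0 (fromCols B₁ (1 : Matrix (Fin r) (Fin r) ℂ)) := by
    rw [← fromRows_fromCols_eq_fromBlocks, fromCols_zero]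
  rw [← forall_card_eq_linearIndependent_col_iff_forall_det_ne_zero, Fintype.card_fin]
  refine forall_congr' fun s => imp_congr_right fun _ => ?_
  rw [hB, ← linearIndependent_col_fromCols_one_iff]
  exact linearIndependent_col_fromRows_zero_comp_iff _ _

theorem stmt7 (n r : ℕ) (hr : r < n) (B₁ : Matrix (Fin r) (Fin (n - r)) ℂ) :
    (∀ s : Finset (Fin (n - r) ⊕ Fin r), s.card = r →
      LinearIndependent ℂ (fun j : s =>
        (Matrix.fromBlocks (0 : Matrix (Fin (n - r)) (Fin (n - r)) ℂ) 0 B₁ 1).transpose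
          (j : Fin (n - r) ⊕ Fin r))) ↔
    (∀ (k : ℕ) (f : Fin k → Fin r) (g : Fin k → Fin (n - r)),
      Function.Injective f → Function.Injective g → (B₁.submatrix f g).det ≠ 0) :=
  stmt7_general n r B₁
end

section
/- Let B₁ be an r×(n−r) complex matrix. All minors of size r of the r×n matrix (B₁, I_r) are nonzero if and only if all minors of B₁ (of every size) are nonzero. -/
/-!
Choosing `k` columns of `B₁` and `r - k` columns of `I_r` and reordering rows and columns (which
only changes the sign of the determinant), the square submatrix of `(B₁, I_r)` becomes block
lower triangular, `[[B₁[f, g], 0], [B₁[f', g], I]]`, where `f'` are the rows carrying the chosen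
unit columns and `f` the remaining `k` rows. Its determinant is therefore the `k × k` minor
`det B₁[f, g]`, and every minor of `B₁` arises this way.
-/

open Function Matrix

section

variable {R : Type*} [CommRing R] {ι κ α β : Type*}

theorem Matrix.det_submatrix_equiv_ne_zero_iff [Fintype ι] [DecidableEq ι] [Fintype α]
    [DecidableEq α] (A : Matrix ι ι R) (e₁ e₂ : α ≃ ι) :
    (A.submatrix e₁ e₂).det ≠ 0 ↔ A.det ≠ 0 := by
  have hsplit : A.submatrix e₁ e₂ = (A.submatrix id (e₁.symm.trans e₂)).submatrix e₁ e₁ := by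
    ext; simp
  have hsign : IsUnit ((Equiv.Perm.sign (e₁.symm.trans e₂) : ℤ) : R) :=
    (Units.isUnit _).map (Int.castRingHom R)
  rw [hsplit, det_submatrix_equiv_self, det_permute', hsign.mul_right_eq_zero.ne]

theorem exists_sumEquiv_comp_inr_eq [Fintype ι] [Fintype α] [Fintype β] (v : β → ι)
    (hv : Injective v) (hcard : Fintype.card α + Fintype.card β = Fintype.card ι) :
    ∃ e : α ⊕ β ≃ ι, e ∘ Sum.inr = v := by
  classical
  have hcompl : Fintype.card α = Fintype.card ↥(Set.range v)ᶜ := by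
    rw [Fintype.card_compl_set, Set.card_range_of_injective hv]
    omega
  refine ⟨(Equiv.sumCongr (Fintype.equivOfCardEq hcompl) (Equiv.ofInjective v hv)).trans
    ((Equiv.sumComm _ _).trans (Equiv.Set.sumCompl _)), ?_⟩
  ext b
  simp

theorem Matrix.det_fromCols_one_submatrix_sumMap [DecidableEq ι] [Fintype α] [Fintype β]
    [DecidableEq α] [DecidableEq β] (B : Matrix ι κ R) (e : α ⊕ β ≃ ι) (g : α → κ) :
    ((fromCols B 1).submatrix e (Sum.map g (e ∘ Sum.inr))).det =
      (B.submatrix (e ∘ Sum.inl) g).det := by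
  have hblock : (fromCols B 1).submatrix e (Sum.map g (e ∘ Sum.inr)) =
      fromBlocks (B.submatrix (e ∘ Sum.inl) g) 0 (B.submatrix (e ∘ Sum.inr) g) 1 := by
    ext (a | a) (b | b) <;> simp [one_apply, e.injective.eq_iff]
  rw [hblock, det_fromBlocks_zero₁₂, det_one, mul_one]

theorem Matrix.det_fromCols_one_submatrix_ne_zero_iff [Fintype ι] [DecidableEq ι] [Fintype α]
    [Fintype β] [DecidableEq α] [DecidableEq β] (B : Matrix ι κ R) (h : ι → κ ⊕ ι)
    (e σ : α ⊕ β ≃ ι) (g : α → κ) (hσ : h ∘ σ = Sum.map g (e ∘ Sum.inr)) :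
    ((fromCols B 1).submatrix id h).det ≠ 0 ↔ (B.submatrix (e ∘ Sum.inl) g).det ≠ 0 := by
  rw [← det_submatrix_equiv_ne_zero_iff _ e σ, submatrix_submatrix, id_comp, hσ,
    det_fromCols_one_submatrix_sumMap]

variable [Fintype ι] [DecidableEq ι] (B : Matrix ι κ R)

theorem Matrix.det_submatrix_ne_zero_of_forall_fromCols_one
    (H : ∀ h : ι → κ ⊕ ι, Injective h → ((fromCols B 1).submatrix id h).det ≠ 0)
    {k : ℕ} (f : Fin k → ι) (g : Fin k → κ) (hf : Injective f) (hg : Injective g) :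
    (B.submatrix f g).det ≠ 0 := by
  classical
  have hcard : Fintype.card ↥(Set.range f)ᶜ + Fintype.card (Fin k) = Fintype.card ι := by
    have := Fintype.card_le_of_injective f hf
    rw [Fintype.card_compl_set, Set.card_range_of_injective hf]
    omega
  obtain ⟨e, he⟩ := exists_sumEquiv_comp_inr_eq f hf hcard
  set e' := (Equiv.sumComm _ _).trans e
  have hrows : e' ∘ Sum.inl = f := he
  have hcols : Injective (Sum.map g (e' ∘ Sum.inr) ∘ e'.symm) :=
    (Sum.map_injective.2 ⟨hg, e'.injective.comp Sum.inr_injective⟩).comp e'.symm.injective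
  rw [← hrows, ← det_fromCols_one_submatrix_ne_zero_iff B _ e' e' g
    (by rw [comp_assoc, e'.symm_comp_self, comp_id])]
  exact H _ hcols

theorem Matrix.det_fromCols_one_submatrix_ne_zero_of_forall
    (H : ∀ (k : ℕ) (f : Fin k → ι) (g : Fin k → κ), Injective f → Injective g →
      (B.submatrix f g).det ≠ 0)
    (h : ι → κ ⊕ ι) (hh : Injective h) : ((fromCols B 1).submatrix id h).det ≠ 0 := by
  classical
  let σ := Equiv.sumCompl fun c => (h c).isLeft
  let g : {c // (h c).isLeft} → κ := fun c => (h c).getLeft c.2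
  let v : {c // ¬(h c).isLeft} → ι := fun c => (h c).getRight (Sum.not_isLeft.1 c.2)
  have hσ : h ∘ σ = Sum.map g v := by
    ext (c | c) <;> simp [σ, g, v]
  obtain ⟨hg, hv⟩ := Sum.map_injective.1 (hσ ▸ hh.comp σ.injective)
  have hcard : Fintype.card {c // (h c).isLeft} + Fintype.card {c // ¬(h c).isLeft} =
      Fintype.card ι := by
    rw [← Fintype.card_sum, Fintype.card_congr σ]
  obtain ⟨e, he⟩ := exists_sumEquiv_comp_inr_eq v hv hcard
  rw [← he] at hσ
  rw [det_fromCols_one_submatrix_ne_zero_iff B h e σ g hσ]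
  let φ := (Fintype.equivFin {c // (h c).isLeft}).symm
  rw [← det_submatrix_equiv_ne_zero_iff _ φ φ, submatrix_submatrix]
  exact H _ _ _ ((e.injective.comp Sum.inl_injective).comp φ.injective) (hg.comp φ.injective)

end

theorem stmt8 (n r : ℕ) (B₁ : Matrix (Fin r) (Fin (n - r)) ℂ) :
    (∀ f : Fin r → Fin (n - r) ⊕ Fin r, Function.Injective f →
      ((Matrix.fromCols B₁ 1).submatrix id f).det ≠ 0) ↔
    (∀ (k : ℕ) (f : Fin k → Fin r) (g : Fin k → Fin (n - r)),
      Function.Injective f → Function.Injective g → (B₁.submatrix f g).det ≠ 0) :=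
  ⟨fun H _ => B₁.det_submatrix_ne_zero_of_forall_fromCols_one H,
    B₁.det_fromCols_one_submatrix_ne_zero_of_forall⟩
end

section
/- Let r < n, let B₁ be an r×(n−r) complex matrix all of whose minors are nonzero, and let X₁ ∈ ℂ^{(n−r)×(n−r)}, X₂ ∈ ℂ^{r×r} be positive semidefinite diagonal matrices with rank X₁ + rank X₂ ≥ r. Then the r×r matrix B₁ X₁ B₁* + X₂ is invertible. -/
open Matrix

theorem stmt9 (n r : ℕ) (hr : r < n) (B₁ : Matrix (Fin r) (Fin (n - r)) ℂ)
    (hmin : ∀ (k : ℕ) (f : Fin k → Fin r) (g : Fin k → Fin (n - r)),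
      Function.Injective f → Function.Injective g → (B₁.submatrix f g).det ≠ 0)
    (d₁ : Fin (n - r) → ℝ) (hd₁ : ∀ i, 0 ≤ d₁ i)
    (d₂ : Fin r → ℝ) (hd₂ : ∀ i, 0 ≤ d₂ i)
    (hrank : r ≤ (Matrix.diagonal fun i => (d₁ i : ℂ)).rank +
      (Matrix.diagonal fun i => (d₂ i : ℂ)).rank) :
    IsUnit (B₁ * Matrix.diagonal (fun i => (d₁ i : ℂ)) * B₁ᴴ +
      Matrix.diagonal (fun i => (d₂ i : ℂ))) := by
  classical
  set D₁ : Matrix (Fin (n - r)) (Fin (n - r)) ℂ := Matrix.diagonal fun i => (d₁ i : ℂ) with hD₁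
  set D₂ : Matrix (Fin r) (Fin r) ℂ := Matrix.diagonal fun i => (d₂ i : ℂ) with hD₂
  set M : Matrix (Fin r) (Fin r) ℂ := B₁ * D₁ * B₁ᴴ + D₂ with hM
  -- key: kernel of M is trivial
  have key : ∀ x : Fin r → ℂ, M *ᵥ x = 0 → x = 0 := by
    intro x hx
    set y : Fin (n - r) → ℂ := B₁ᴴ *ᵥ x with hy
    have h0 : star x ⬝ᵥ (M *ᵥ x) = 0 := by rw [hx, dotProduct_zero]
    have h1 : star x ⬝ᵥ ((B₁ * D₁ * B₁ᴴ) *ᵥ x) = star y ⬝ᵥ (D₁ *ᵥ y) := by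
      rw [← Matrix.mulVec_mulVec, ← Matrix.mulVec_mulVec, Matrix.dotProduct_mulVec]
      congr 1
      rw [hy, star_mulVec, conjTranspose_conjTranspose]
    have hsplit : star x ⬝ᵥ (M *ᵥ x)
        = (∑ j, (d₁ j * Complex.normSq (y j) : ℝ) + ∑ i, (d₂ i * Complex.normSq (x i) : ℝ) : ℝ) := by
      rw [hM, Matrix.add_mulVec, dotProduct_add, h1]
      push_cast
      simp only [dotProduct, hD₁, hD₂, Matrix.mulVec_diagonal, Pi.star_apply]
      congr 1 <;> exact Finset.sum_congr rfl fun i _ => by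
        rw [Complex.normSq_eq_conj_mul_self, ← Complex.star_def]; ring
    have hre : (∑ j, d₁ j * Complex.normSq (y j)) + ∑ i, d₂ i * Complex.normSq (x i) = 0 := by
      have := h0
      rw [hsplit] at this
      exact_mod_cast this
    have hnn1 : ∀ j : Fin (n - r), 0 ≤ d₁ j * Complex.normSq (y j) := fun j =>
      mul_nonneg (hd₁ j) (Complex.normSq_nonneg _)
    have hnn2 : ∀ i : Fin r, 0 ≤ d₂ i * Complex.normSq (x i) := fun i =>
      mul_nonneg (hd₂ i) (Complex.normSq_nonneg _)
    have hs1 : ∑ j, d₁ j * Complex.normSq (y j) = 0 := by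
      have h1' : 0 ≤ ∑ j, d₁ j * Complex.normSq (y j) := Finset.sum_nonneg fun j _ => hnn1 j
      have h2' : 0 ≤ ∑ i, d₂ i * Complex.normSq (x i) := Finset.sum_nonneg fun i _ => hnn2 i
      linarith
    have hs2 : ∑ i, d₂ i * Complex.normSq (x i) = 0 := by
      have h1' : 0 ≤ ∑ j, d₁ j * Complex.normSq (y j) := Finset.sum_nonneg fun j _ => hnn1 j
      have h2' : 0 ≤ ∑ i, d₂ i * Complex.normSq (x i) := Finset.sum_nonneg fun i _ => hnn2 i
      linarith
    have hyz : ∀ j, d₁ j ≠ 0 → y j = 0 := by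
      intro j hj
      have := (Finset.sum_eq_zero_iff_of_nonneg (fun j _ => hnn1 j)).mp hs1 j (Finset.mem_univ j)
      rcases mul_eq_zero.mp this with h | h
      · exact absurd h hj
      · exact Complex.normSq_eq_zero.mp h
    have hxz : ∀ i, d₂ i ≠ 0 → x i = 0 := by
      intro i hi
      have := (Finset.sum_eq_zero_iff_of_nonneg (fun i _ => hnn2 i)).mp hs2 i (Finset.mem_univ i)
      rcases mul_eq_zero.mp this with h | h
      · exact absurd h hi
      · exact Complex.normSq_eq_zero.mp h
    -- combinatorial part
    set S : Finset (Fin r) := Finset.univ.filter (fun i => d₂ i = 0) with hS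
    set T : Finset (Fin (n - r)) := Finset.univ.filter (fun j => d₁ j ≠ 0) with hT
    have hrank1 : D₁.rank = T.card := by
      rw [hD₁, Matrix.rank_diagonal, Fintype.card_subtype]
      congr 1
      apply Finset.filter_congr
      intro j _
      simp [Complex.ofReal_eq_zero]
    have hrank2 : D₂.rank = (Finset.univ.filter (fun i => d₂ i ≠ 0)).card := by
      rw [hD₂, Matrix.rank_diagonal, Fintype.card_subtype]
      congr 1
      apply Finset.filter_congr
      intro j _
      simp [Complex.ofReal_eq_zero]
    have hcardsum : S.card + (Finset.univ.filter (fun i => d₂ i ≠ 0)).card = r := by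
      rw [hS, Finset.card_filter_add_card_filter_not]
      simp
    have hk : S.card ≤ T.card := by
      rw [hrank1, hrank2] at hrank
      omega
    set k := S.card with hkdef
    set g : Fin k → Fin r := fun i => S.orderEmbOfFin rfl i with hg
    set f : Fin k → Fin (n - r) := fun i => T.orderEmbOfFin rfl (Fin.castLE hk i) with hf
    have hginj : Function.Injective g := fun a b hab => (S.orderEmbOfFin rfl).injective hab
    have hfinj : Function.Injective f := fun a b hab =>
      Fin.castLE_injective hk ((T.orderEmbOfFin rfl).injective hab)
    have hgmem : ∀ i, g i ∈ S := fun i => Finset.orderEmbOfFin_mem S rfl i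
    have hfmem : ∀ i, f i ∈ T := fun i => Finset.orderEmbOfFin_mem T rfl _
    set A := B₁.submatrix g f with hA
    have hAdet : A.det ≠ 0 := hmin k g f hginj hfinj
    have hAHdet : Aᴴ.det ≠ 0 := by
      rw [Matrix.det_conjTranspose]
      simpa using hAdet
    have hAx : Aᴴ *ᵥ (x ∘ g) = 0 := by
      ext j
      have hyfj : y (f j) = 0 := hyz (f j) (by simpa [hT] using hfmem j)
      have hexp : y (f j) = ∑ i : Fin r, star (B₁ i (f j)) * x i := by
        simp [hy, Matrix.mulVec, dotProduct, Matrix.conjTranspose_apply]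
      have hSsum : ∑ i : Fin r, star (B₁ i (f j)) * x i
          = ∑ i ∈ S, star (B₁ i (f j)) * x i := by
        symm
        apply Finset.sum_subset (Finset.subset_univ S)
        intro i _ hi
        have : d₂ i ≠ 0 := by simpa [hS] using hi
        simp [hxz i this]
      have hSimg : S = Finset.image g Finset.univ := by
        apply Finset.eq_of_subset_of_card_le
        · intro i hi
          have : (i : Fin r) ∈ Set.range (S.orderEmbOfFin rfl) := by
            rw [Finset.range_orderEmbOfFin]
            exact hi
          rcases this with ⟨i₀, hi₀⟩
          exact Finset.mem_image.mpr ⟨i₀, Finset.mem_univ _, hi₀⟩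
        · rw [Finset.card_image_of_injective _ hginj]
          simp [hkdef]
      have hgsum : ∑ i ∈ S, star (B₁ i (f j)) * x i
          = ∑ i : Fin k, star (B₁ (g i) (f j)) * x (g i) := by
        rw [hSimg, Finset.sum_image (fun a _ b _ hab => hginj hab)]
      have : (Aᴴ *ᵥ (x ∘ g)) j = y (f j) := by
        rw [hexp, hSsum, hgsum]
        simp [Matrix.mulVec, dotProduct, Matrix.conjTranspose_apply, hA, Matrix.submatrix_apply]
      rw [this, hyfj]
      rfl
    have hxg : x ∘ g = 0 := Matrix.eq_zero_of_mulVec_eq_zero hAHdet hAx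
    ext i
    by_cases hi : d₂ i = 0
    · have hiS : i ∈ S := by simp [hS, hi]
      have : (i : Fin r) ∈ Set.range (S.orderEmbOfFin rfl) := by
        rw [Finset.range_orderEmbOfFin]; exact hiS
      rcases this with ⟨i₀, hi₀⟩
      have := congrFun hxg i₀
      simpa [hg, hi₀] using this
    · simp [hxz i hi]
  have hinj : Function.Injective M.mulVec := by
    intro a b hab
    have : M *ᵥ (a - b) = 0 := by rw [Matrix.mulVec_sub, hab, sub_self]
    exact sub_eq_zero.mp (key _ this)
  exact Matrix.mulVec_injective_iff_isUnit.mp hinj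
end

section
/- Let r < n, let B₁ be an r×(n−r) complex matrix all of whose minors are nonzero, and let X₁ ∈ ℂ^{(n−r)×(n−r)}, X₂ ∈ ℂ^{r×r} be positive semidefinite diagonal matrices with rank X₁ + rank X₂ ≥ r. Then rank( X₁ − X₁ B₁* (B₁ X₁ B₁* + X₂)^{−1} B₁ X₁ ) = rank X₁ + rank X₂ − r. -/
open Matrix



def submoduleProdEquiv {R M N : Type*} [Semiring R] [AddCommMonoid M] [AddCommMonoid N]
    [Module R M] [Module R N] (p : Submodule R M) (q : Submodule R N) :
    (p.prod q) ≃ₗ[R] p × q where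
  toFun x := (⟨x.1.1, x.2.1⟩, ⟨x.1.2, x.2.2⟩)
  invFun a := ⟨(a.1.1, a.2.1), a.1.2, a.2.2⟩
  map_add' _ _ := rfl
  map_smul' _ _ := rfl
  left_inv _ := rfl
  right_inv _ := rfl

lemma rank_fromBlocks_diag {m n : Type*} [Fintype m] [Fintype n] [DecidableEq m] [DecidableEq n]
    (A : Matrix m m ℂ) (D : Matrix n n ℂ) :
    (fromBlocks A 0 0 D).rank = A.rank + D.rank := by
  classical
  let e := LinearEquiv.sumArrowLequivProdArrow m n ℂ ℂ
  have key : (fromBlocks A 0 0 D).mulVecLin =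
      (e.symm.toLinearMap.comp ((A.mulVecLin.prodMap D.mulVecLin).comp e.toLinearMap)) := by
    apply LinearMap.ext
    intro v
    have hv : v = Sum.elim (v ∘ Sum.inl) (v ∘ Sum.inr) := (Sum.elim_comp_inl_inr v).symm
    simp only [LinearMap.comp_apply, mulVecLin_apply]
    rw [hv, fromBlocks_mulVec]
    ext i
    cases i <;>
      simp [e, LinearEquiv.sumArrowLequivProdArrow, Equiv.sumArrowEquivProdArrow,
        mulVec_zero, Function.comp]
  rw [Matrix.rank, key]
  rw [LinearMap.range_comp, LinearMap.range_comp_of_range_eq_top _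
    (LinearMap.range_eq_top.mpr e.surjective)]
  rw [LinearEquiv.finrank_map_eq]
  have hp : LinearMap.range (A.mulVecLin.prodMap D.mulVecLin) =
      (LinearMap.range A.mulVecLin).prod (LinearMap.range D.mulVecLin) := by
    ext ⟨a, b⟩
    simp only [LinearMap.mem_range, Submodule.mem_prod, Prod.exists, LinearMap.prodMap_apply,
      Prod.mk.injEq]
    exact ⟨fun ⟨x, y, h1, h2⟩ => ⟨⟨x, h1⟩, ⟨y, h2⟩⟩, fun ⟨⟨x, h1⟩, ⟨y, h2⟩⟩ => ⟨x, y, h1, h2⟩⟩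
  rw [hp]
  rw [LinearEquiv.finrank_eq (submoduleProdEquiv _ _), Module.finrank_prod]
  rfl



lemma diag_quad {m : Type*} [Fintype m] [DecidableEq m] (c : m → ℝ) (v : m → ℂ) :
    star v ⬝ᵥ (Matrix.diagonal (fun i => (c i : ℂ)) *ᵥ v) =
      ∑ i, (c i : ℂ) * (Complex.normSq (v i) : ℂ) := by
  simp only [dotProduct, mulVec_diagonal, Pi.star_apply, RCLike.star_def]
  refine Finset.sum_congr rfl fun i _ => ?_
  rw [show (starRingEnd ℂ) (v i) * ((c i : ℂ) * v i) = (c i : ℂ) * (v i * (starRingEnd ℂ) (v i))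
      from by ring, Complex.mul_conj]

lemma key_det (n r : ℕ) (B₁ : Matrix (Fin r) (Fin (n - r)) ℂ)
    (hmin : ∀ (k : ℕ) (f : Fin k → Fin r) (g : Fin k → Fin (n - r)),
      Function.Injective f → Function.Injective g → (B₁.submatrix f g).det ≠ 0)
    (d₁ : Fin (n - r) → ℝ) (hd₁ : ∀ i, 0 ≤ d₁ i)
    (d₂ : Fin r → ℝ) (hd₂ : ∀ i, 0 ≤ d₂ i)
    (hcard : r ≤ Fintype.card {j // d₁ j ≠ 0} + Fintype.card {i // d₂ i ≠ 0}) :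
    (B₁ * Matrix.diagonal (fun i => (d₁ i : ℂ)) * B₁ᴴ +
      Matrix.diagonal (fun i => (d₂ i : ℂ))).det ≠ 0 := by
  classical
  intro hdet
  obtain ⟨x, hx0, hSx⟩ := (Matrix.exists_mulVec_eq_zero_iff).mpr hdet
  set y : Fin (n - r) → ℂ := B₁ᴴ *ᵥ x with hy
  have hquad : star x ⬝ᵥ ((B₁ * Matrix.diagonal (fun i => (d₁ i : ℂ)) * B₁ᴴ +
      Matrix.diagonal (fun i => (d₂ i : ℂ))) *ᵥ x) =
      (((∑ j, d₁ j * Complex.normSq (y j)) + ∑ i, d₂ i * Complex.normSq (x i) : ℝ) : ℂ) := by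
    rw [add_mulVec, dotProduct_add]
    have h1 : star x ⬝ᵥ ((B₁ * Matrix.diagonal (fun i => (d₁ i : ℂ)) * B₁ᴴ) *ᵥ x) =
        star y ⬝ᵥ (Matrix.diagonal (fun i => (d₁ i : ℂ)) *ᵥ y) := by
      rw [← mulVec_mulVec, ← mulVec_mulVec, dotProduct_mulVec (star x)]
      congr 1
      have := star_mulVec (M := B₁ᴴ) (v := x)
      rw [conjTranspose_conjTranspose] at this
      rw [hy, this]
    rw [h1, diag_quad, diag_quad]
    push_cast
    ring
  rw [hSx, dotProduct_zero] at hquad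
  have hsum : (∑ j, d₁ j * Complex.normSq (y j)) + ∑ i, d₂ i * Complex.normSq (x i) = 0 := by
    exact_mod_cast hquad.symm
  have hs1 : ∀ j, d₁ j * Complex.normSq (y j) = 0 := by
    have h1 : (0:ℝ) ≤ ∑ j, d₁ j * Complex.normSq (y j) :=
      Finset.sum_nonneg fun j _ => mul_nonneg (hd₁ j) (Complex.normSq_nonneg _)
    have h2 : (0:ℝ) ≤ ∑ i, d₂ i * Complex.normSq (x i) :=
      Finset.sum_nonneg fun i _ => mul_nonneg (hd₂ i) (Complex.normSq_nonneg _)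
    have h3 : ∑ j, d₁ j * Complex.normSq (y j) = 0 := by linarith
    intro j
    exact (Finset.sum_eq_zero_iff_of_nonneg
      (fun j _ => mul_nonneg (hd₁ j) (Complex.normSq_nonneg _))).mp h3 j (Finset.mem_univ j)
  have hs2 : ∀ i, d₂ i * Complex.normSq (x i) = 0 := by
    have h1 : (0:ℝ) ≤ ∑ j, d₁ j * Complex.normSq (y j) :=
      Finset.sum_nonneg fun j _ => mul_nonneg (hd₁ j) (Complex.normSq_nonneg _)
    have h2 : (0:ℝ) ≤ ∑ i, d₂ i * Complex.normSq (x i) :=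
      Finset.sum_nonneg fun i _ => mul_nonneg (hd₂ i) (Complex.normSq_nonneg _)
    have h3 : ∑ i, d₂ i * Complex.normSq (x i) = 0 := by linarith
    intro i
    exact (Finset.sum_eq_zero_iff_of_nonneg
      (fun i _ => mul_nonneg (hd₂ i) (Complex.normSq_nonneg _))).mp h3 i (Finset.mem_univ i)
  have hx2 : ∀ i, d₂ i ≠ 0 → x i = 0 := fun i hi =>
    Complex.normSq_eq_zero.mp (by rcases mul_eq_zero.mp (hs2 i) with h | h; exact absurd h hi; exact h)
  have hy1 : ∀ j, d₁ j ≠ 0 → y j = 0 := fun j hj =>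
    Complex.normSq_eq_zero.mp (by rcases mul_eq_zero.mp (hs1 j) with h | h; exact absurd h hj; exact h)
  -- combinatorics
  set K := {i : Fin r // x i ≠ 0}
  set k := Fintype.card K with hk
  have hdisj : Fintype.card K + Fintype.card {i // d₂ i ≠ 0} ≤ r := by
    rw [Fintype.card_subtype, Fintype.card_subtype]
    rw [← Finset.card_union_of_disjoint]
    · calc _ ≤ Finset.univ.card := Finset.card_le_univ _
        _ = r := by simp
    · rw [Finset.disjoint_filter]
      intro i _ hxi hdi
      exact hxi (hx2 i hdi)
  have hkle : k ≤ Fintype.card {j // d₁ j ≠ 0} := by omega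
  obtain ⟨emb⟩ : Nonempty (Fin k ↪ {j // d₁ j ≠ 0}) :=
    Function.Embedding.nonempty_of_card_le (by simpa using hkle)
  set e := (Fintype.equivFin K).symm
  set f : Fin k → Fin r := fun b => (e b).1 with hf
  set g : Fin k → Fin (n - r) := fun b => (emb b).1 with hg
  have hfinj : Function.Injective f := fun a b hab => e.injective (Subtype.ext hab)
  have hginj : Function.Injective g := fun a b hab => emb.injective (Subtype.ext hab)
  set v : Fin k → ℂ := fun b => x (f b) with hv
  have hmv : (B₁.submatrix f g)ᴴ *ᵥ v = 0 := by
    funext a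
    have hya : y (g a) = 0 := hy1 _ (emb a).2
    have hyexp : y (g a) = ∑ i, (starRingEnd ℂ) (B₁ i (g a)) * x i := by
      simp [hy, mulVec, dotProduct, conjTranspose_apply]
    have hfilter : ∑ i, (starRingEnd ℂ) (B₁ i (g a)) * x i =
        ∑ i ∈ Finset.univ.filter (fun i => x i ≠ 0),
          (starRingEnd ℂ) (B₁ i (g a)) * x i := by
      refine (Finset.sum_filter_of_ne ?_).symm
      intro i _ hne hxi
      exact hne (by rw [hxi, mul_zero])
    have hsub : ∑ i ∈ Finset.univ.filter (fun i => x i ≠ 0),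
        (starRingEnd ℂ) (B₁ i (g a)) * x i =
        ∑ s : K, (starRingEnd ℂ) (B₁ s.1 (g a)) * x s.1 := by
      refine Finset.sum_subtype _ (fun i => ?_) _
      simp
    have hcomp : ∑ s : K, (starRingEnd ℂ) (B₁ s.1 (g a)) * x s.1 =
        ∑ b : Fin k, (starRingEnd ℂ) (B₁ (f b) (g a)) * x (f b) :=
      (Equiv.sum_comp e (fun s : K => (starRingEnd ℂ) (B₁ s.1 (g a)) * x s.1)).symm
    have : ∑ b : Fin k, (starRingEnd ℂ) (B₁ (f b) (g a)) * x (f b) = 0 := by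
      rw [← hcomp, ← hsub, ← hfilter, ← hyexp, hya]
    simpa [mulVec, dotProduct, conjTranspose_apply, submatrix_apply, hv] using this
  have hdet' : ((B₁.submatrix f g)ᴴ).det ≠ 0 := by
    rw [det_conjTranspose]
    exact star_ne_zero.mpr (hmin k f g hfinj hginj)
  have hv0 : v = 0 := Matrix.eq_zero_of_mulVec_eq_zero hdet' hmv
  obtain ⟨i₀, hi₀⟩ : ∃ i, x i ≠ 0 := by
    by_contra h
    push_neg at h
    exact hx0 (funext h)
  have : v (e.symm ⟨i₀, hi₀⟩) = x i₀ := by simp [hv, hf]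
  rw [hv0] at this
  exact hi₀ (by simpa using this.symm)



theorem stmt10 (n r : ℕ) (hr : r < n) (B₁ : Matrix (Fin r) (Fin (n - r)) ℂ)
    (hmin : ∀ (k : ℕ) (f : Fin k → Fin r) (g : Fin k → Fin (n - r)),
      Function.Injective f → Function.Injective g → (B₁.submatrix f g).det ≠ 0)
    (d₁ : Fin (n - r) → ℝ) (hd₁ : ∀ i, 0 ≤ d₁ i)
    (d₂ : Fin r → ℝ) (hd₂ : ∀ i, 0 ≤ d₂ i)
    (hrank : r ≤ (Matrix.diagonal fun i => (d₁ i : ℂ)).rank +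
      (Matrix.diagonal fun i => (d₂ i : ℂ)).rank) :
    (Matrix.diagonal (fun i => (d₁ i : ℂ)) -
      Matrix.diagonal (fun i => (d₁ i : ℂ)) * B₁ᴴ *
        (B₁ * Matrix.diagonal (fun i => (d₁ i : ℂ)) * B₁ᴴ +
          Matrix.diagonal (fun i => (d₂ i : ℂ)))⁻¹ *
        B₁ * Matrix.diagonal (fun i => (d₁ i : ℂ))).rank =
      (Matrix.diagonal fun i => (d₁ i : ℂ)).rank +
        (Matrix.diagonal fun i => (d₂ i : ℂ)).rank - r := by
  classical
  set X₁ := Matrix.diagonal (fun i => (d₁ i : ℂ)) with hX₁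
  set X₂ := Matrix.diagonal (fun i => (d₂ i : ℂ)) with hX₂
  set S := B₁ * X₁ * B₁ᴴ + X₂ with hS
  have hcd1 : X₁.rank = Fintype.card {j // d₁ j ≠ 0} := by
    rw [hX₁, Matrix.rank_diagonal]
    exact Fintype.card_congr (Equiv.subtypeEquivRight (by intro j; simp))
  have hcd2 : X₂.rank = Fintype.card {i // d₂ i ≠ 0} := by
    rw [hX₂, Matrix.rank_diagonal]
    exact Fintype.card_congr (Equiv.subtypeEquivRight (by intro i; simp))
  have hdetS : S.det ≠ 0 := key_det n r B₁ hmin d₁ hd₁ d₂ hd₂ (by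
    rw [hcd1, hcd2] at hrank; exact hrank)
  have hUnit : IsUnit S.det := isUnit_iff_ne_zero.mpr hdetS
  haveI : Invertible S := S.invertibleOfIsUnitDet hUnit
  set E := X₁ - X₁ * B₁ᴴ * S⁻¹ * B₁ * X₁ with hE
  have hdetL : IsUnit (fromBlocks (1 : Matrix (Fin r) (Fin r) ℂ) 0 (X₁ * B₁ᴴ * ⅟S) 1).det := by
    rw [det_fromBlocks_zero₁₂]
    simp
  have hdetU : IsUnit (fromBlocks (1 : Matrix (Fin r) (Fin r) ℂ) (⅟S * (B₁ * X₁)) 0 1).det := by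
    rw [det_fromBlocks_zero₂₁]
    simp
  have main : (fromBlocks S (B₁ * X₁) (X₁ * B₁ᴴ) X₁).rank = r + E.rank := by
    rw [fromBlocks_eq_of_invertible₁₁ S (B₁ * X₁) (X₁ * B₁ᴴ) X₁]
    rw [rank_mul_eq_left_of_isUnit_det _ _ hdetU]
    rw [rank_mul_eq_right_of_isUnit_det _ _ hdetL]
    rw [rank_fromBlocks_diag]
    congr 1
    · rw [rank_of_isUnit S ((Matrix.isUnit_iff_isUnit_det S).mpr hUnit), Fintype.card_fin]
    · congr 1
      rw [hE, invOf_eq_nonsing_inv]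
      simp only [Matrix.mul_assoc]
  have factor : fromBlocks S (B₁ * X₁) (X₁ * B₁ᴴ) X₁ =
      fromBlocks (1 : Matrix (Fin r) (Fin r) ℂ) B₁ 0 1 * fromBlocks X₂ 0 0 X₁ *
        (fromBlocks (1 : Matrix (Fin r) (Fin r) ℂ) B₁ 0 1)ᴴ := by
    rw [fromBlocks_conjTranspose]
    simp only [fromBlocks_multiply, Matrix.mul_zero, Matrix.zero_mul, Matrix.one_mul,
      Matrix.mul_one, add_zero, zero_add, conjTranspose_one, conjTranspose_zero, hS]
    rw [add_comm, Matrix.mul_assoc]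
  have hdetA : IsUnit (fromBlocks (1 : Matrix (Fin r) (Fin r) ℂ) B₁ 0 1).det := by
    rw [det_fromBlocks_zero₂₁]; simp
  have hdetAH : IsUnit ((fromBlocks (1 : Matrix (Fin r) (Fin r) ℂ) B₁ 0 1)ᴴ).det := by
    rw [det_conjTranspose]; exact hdetA.star
  have main2 : (fromBlocks S (B₁ * X₁) (X₁ * B₁ᴴ) X₁).rank = X₂.rank + X₁.rank := by
    rw [factor, rank_mul_eq_left_of_isUnit_det _ _ hdetAH,
      rank_mul_eq_right_of_isUnit_det _ _ hdetA, rank_fromBlocks_diag]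
  have : r + E.rank = X₂.rank + X₁.rank := by rw [← main, main2]
  omega
end

section
/- Let r < n, B₁ an r×(n−r) complex matrix, X₁, X₂ positive semidefinite diagonal matrices of sizes (n−r) and r, respectively, such that H := B₁ X₁ B₁* + X₂ is invertible. Set G := I_{n−r} − X₁ B₁* H^{−1} B₁. Then the maps H^{−1} B₁ restricted to ker G and X₁ B₁* restricted to ker X₂ are mutually inverse bijections between ker G and ker X₂; in particular dim ker G = dim ker X₂. -/
open Matrix

theorem stmt11 (n r : ℕ) (hr : r < n) (B₁ : Matrix (Fin r) (Fin (n - r)) ℂ)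
    (d₁ : Fin (n - r) → ℝ) (hd₁ : ∀ i, 0 ≤ d₁ i)
    (d₂ : Fin r → ℝ) (hd₂ : ∀ i, 0 ≤ d₂ i)
    (X₁ : Matrix (Fin (n - r)) (Fin (n - r)) ℂ) (hX₁ : X₁ = Matrix.diagonal fun i => (d₁ i : ℂ))
    (X₂ : Matrix (Fin r) (Fin r) ℂ) (hX₂ : X₂ = Matrix.diagonal fun i => (d₂ i : ℂ))
    (H : Matrix (Fin r) (Fin r) ℂ) (hH : H = B₁ * X₁ * B₁ᴴ + X₂) (hHu : IsUnit H)
    (G : Matrix (Fin (n - r)) (Fin (n - r)) ℂ)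
    (hG : G = 1 - X₁ * B₁ᴴ * H⁻¹ * B₁) :
    (∀ x ∈ LinearMap.ker G.mulVecLin,
      (H⁻¹ * B₁).mulVec x ∈ LinearMap.ker X₂.mulVecLin ∧
        (X₁ * B₁ᴴ).mulVec ((H⁻¹ * B₁).mulVec x) = x) ∧
    (∀ y ∈ LinearMap.ker X₂.mulVecLin,
      (X₁ * B₁ᴴ).mulVec y ∈ LinearMap.ker G.mulVecLin ∧
        (H⁻¹ * B₁).mulVec ((X₁ * B₁ᴴ).mulVec y) = y) ∧
    Module.finrank ℂ (LinearMap.ker G.mulVecLin) =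
      Module.finrank ℂ (LinearMap.ker X₂.mulVecLin) := by
  have hdet : IsUnit H.det := (Matrix.isUnit_iff_isUnit_det H).mp hHu
  have hinv1 : H⁻¹ * H = 1 := Matrix.nonsing_inv_mul H hdet
  have hinv2 : H * H⁻¹ = 1 := Matrix.mul_nonsing_inv H hdet
  have hassoc : X₁ * B₁ᴴ * H⁻¹ * B₁ = (X₁ * B₁ᴴ) * (H⁻¹ * B₁) := by
    simp only [Matrix.mul_assoc]
  have hsplit : ∀ v, (X₁ * B₁ᴴ * H⁻¹ * B₁) *ᵥ v = (X₁ * B₁ᴴ) *ᵥ ((H⁻¹ * B₁) *ᵥ v) := by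
    intro v; rw [Matrix.mulVec_mulVec, hassoc]
  have hsplit2 : ∀ v, (B₁ * X₁ * B₁ᴴ) *ᵥ v = B₁ *ᵥ ((X₁ * B₁ᴴ) *ᵥ v) := by
    intro v; rw [Matrix.mulVec_mulVec, Matrix.mul_assoc]
  have hX2 : X₂ = H - B₁ * X₁ * B₁ᴴ := by rw [hH]; abel
  -- forward direction
  have fwd : ∀ x, G.mulVec x = 0 →
      X₂.mulVec ((H⁻¹ * B₁).mulVec x) = 0 ∧
      (X₁ * B₁ᴴ).mulVec ((H⁻¹ * B₁).mulVec x) = x := by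
    intro x hx
    have hx' : (X₁ * B₁ᴴ * H⁻¹ * B₁) *ᵥ x = x := by
      rw [hG, Matrix.sub_mulVec, Matrix.one_mulVec, sub_eq_zero] at hx
      exact hx.symm
    have hfix : (X₁ * B₁ᴴ) *ᵥ ((H⁻¹ * B₁) *ᵥ x) = x := by rw [← hsplit]; exact hx'
    refine ⟨?_, hfix⟩
    have hHv : H *ᵥ ((H⁻¹ * B₁) *ᵥ x) = B₁ *ᵥ x := by
      rw [Matrix.mulVec_mulVec, ← Matrix.mul_assoc, hinv2, Matrix.one_mul]
    have hBv : (B₁ * X₁ * B₁ᴴ) *ᵥ ((H⁻¹ * B₁) *ᵥ x) = B₁ *ᵥ x := by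
      rw [hsplit2, hfix]
    rw [hX2, Matrix.sub_mulVec, hHv, hBv, sub_self]
  -- backward direction
  have bwd : ∀ y, X₂.mulVec y = 0 →
      G.mulVec ((X₁ * B₁ᴴ).mulVec y) = 0 ∧
      (H⁻¹ * B₁).mulVec ((X₁ * B₁ᴴ).mulVec y) = y := by
    intro y hy
    have hHy : H *ᵥ y = (B₁ * X₁ * B₁ᴴ) *ᵥ y := by
      rw [hH, Matrix.add_mulVec, hy, add_zero]
    have key : (H⁻¹ * B₁) *ᵥ ((X₁ * B₁ᴴ) *ᵥ y) = y := by
      have step : (H⁻¹ * B₁) *ᵥ ((X₁ * B₁ᴴ) *ᵥ y) = H⁻¹ *ᵥ ((B₁ * X₁ * B₁ᴴ) *ᵥ y) := by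
        rw [Matrix.mulVec_mulVec, Matrix.mulVec_mulVec]
        simp only [Matrix.mul_assoc]
      rw [step, ← hHy, Matrix.mulVec_mulVec, hinv1, Matrix.one_mulVec]
    refine ⟨?_, key⟩
    rw [hG, Matrix.sub_mulVec, Matrix.one_mulVec, hsplit, key, sub_self]
  refine ⟨?_, ?_, ?_⟩
  · intro x hx
    have := fwd x (LinearMap.mem_ker.mp hx)
    exact ⟨LinearMap.mem_ker.mpr this.1, this.2⟩
  · intro y hy
    have := bwd y (LinearMap.mem_ker.mp hy)
    exact ⟨LinearMap.mem_ker.mpr this.1, this.2⟩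
  · have hF : ∀ x ∈ LinearMap.ker G.mulVecLin,
        (H⁻¹ * B₁).mulVecLin x ∈ LinearMap.ker X₂.mulVecLin := fun x hx =>
      LinearMap.mem_ker.mpr (fwd x (LinearMap.mem_ker.mp hx)).1
    have hGm : ∀ y ∈ LinearMap.ker X₂.mulVecLin,
        (X₁ * B₁ᴴ).mulVecLin y ∈ LinearMap.ker G.mulVecLin := fun y hy =>
      LinearMap.mem_ker.mpr (bwd y (LinearMap.mem_ker.mp hy)).1
    let F := (H⁻¹ * B₁).mulVecLin.restrict hF
    let Gm := (X₁ * B₁ᴴ).mulVecLin.restrict hGm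
    have h₁ : F.comp Gm = LinearMap.id := by
      apply LinearMap.ext
      intro y
      apply Subtype.ext
      simp only [LinearMap.comp_apply, LinearMap.restrict_apply, Matrix.mulVecLin_apply,
        LinearMap.id_coe, id_eq]
      exact (bwd y.1 (LinearMap.mem_ker.mp y.2)).2
    have h₂ : Gm.comp F = LinearMap.id := by
      apply LinearMap.ext
      intro x
      apply Subtype.ext
      simp only [LinearMap.comp_apply, LinearMap.restrict_apply, Matrix.mulVecLin_apply,
        LinearMap.id_coe, id_eq]
      exact (fwd x.1 (LinearMap.mem_ker.mp x.2)).2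
    exact (LinearEquiv.ofLinear F Gm h₁ h₂).finrank_eq
end

section
/- Let θ and θ₀ be Lagrange planes in ℂ^n × ℂ^n with respect to the indefinite inner product [(a;b),(a';b')] = i((b,a') − (a,b')), and let Π be a linear subspace with θ ∩ θ₀ ⊆ Π ⊆ θ₀. Then there exists a Lagrange plane θ' such that θ' ∩ θ₀ = Π and dim(θ / (θ ∩ θ')) = dim Π − dim(θ ∩ θ₀). -/
noncomputable def lform (n : ℕ) (x y : (Fin n → ℂ) × (Fin n → ℂ)) : ℂ :=
  Complex.I * ((∑ i, x.2 i * star (y.1 i)) - (∑ i, x.1 i * star (y.2 i)))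

def IsLagrange (n : ℕ) (θ : Submodule ℂ ((Fin n → ℂ) × (Fin n → ℂ))) : Prop :=
  (∀ x ∈ θ, ∀ y ∈ θ, lform n x y = 0) ∧ Module.finrank ℂ θ = n

/-!
Take `θ' = Π + (θ ∩ Π^{[⊥]})`. Since `Π ⊆ θ₀` is neutral and `θ = θ^{[⊥]}`, both summands are
neutral and orthogonal to each other. Moreover `θ ∩ Π^{[⊥]} = (θ + Π)^{[⊥]}` has dimension
`n - dim Π + dim (θ ∩ Π)`, so `dim θ' = n`; the modular law gives `θ' ∩ θ₀ = Π` and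
`θ ∩ θ' = θ ∩ Π^{[⊥]}`, and `θ ∩ Π = θ ∩ θ₀` yields the codimension count.
-/

open Module

lemma finrank_map_starLinearEquiv {E : Type*} [AddCommGroup E] [Module ℂ E] [StarAddMonoid E]
    [StarModule ℂ E] (W : Submodule ℂ E) :
    finrank ℂ (W.map (starLinearEquiv ℂ).toLinearMap) = finrank ℂ W :=
  congrArg Cardinal.toNat <| (rank_eq_of_equiv_equiv star
    ((starLinearEquiv ℂ).submoduleMap W).toAddEquiv star_involutive.bijective
    fun c x => ((starLinearEquiv ℂ).submoduleMap W).map_smulₛₗ c x).symm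

section Lagrange

variable {n : ℕ}

noncomputable def symplecticForm (n : ℕ) : LinearMap.BilinForm ℂ ((Fin n → ℂ) × (Fin n → ℂ)) :=
  Complex.I • ((dotProductBilin ℂ ℂ).compl₁₂ (LinearMap.snd ℂ _ _) (LinearMap.fst ℂ _ _) -
    (dotProductBilin ℂ ℂ).compl₁₂ (LinearMap.fst ℂ _ _) (LinearMap.snd ℂ _ _))

lemma symplecticForm_apply (x y : (Fin n → ℂ) × (Fin n → ℂ)) :
    symplecticForm n x y = Complex.I * (x.2 ⬝ᵥ y.1 - x.1 ⬝ᵥ y.2) := rfl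

lemma lform_eq_symplecticForm (x y : (Fin n → ℂ) × (Fin n → ℂ)) :
    lform n x y = symplecticForm n x (star y) := rfl

lemma symplecticForm_isAlt : (symplecticForm n).IsAlt := fun x => by
  rw [symplecticForm_apply, dotProduct_comm, sub_self, mul_zero]

lemma symplecticForm_nondegenerate : (symplecticForm n).Nondegenerate := by
  refine symplecticForm_isAlt.isRefl.nondegenerate_iff_separatingLeft.2 fun x hx => ?_
  ext i
  · simpa [symplecticForm_apply] using hx (0, Pi.single i 1)
  · simpa [symplecticForm_apply] using hx (Pi.single i 1, 0)

lemma lform_comm (x y : (Fin n → ℂ) × (Fin n → ℂ)) : lform n y x = star (lform n x y) := by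
  simp only [lform, star_mul', star_sub, star_sum, Complex.star_def, Complex.conj_conj,
    Complex.conj_I, mul_comm (x.1 _), mul_comm (x.2 _)]
  ring

/-- The complement `W^{[⊥]}`. As `[x, y] = ω(x, ȳ)` for the symplectic bilinear form `ω`, it is
the `ω`-orthogonal of `W̄`, which gives access to the dimension formula for nondegenerate forms. -/
noncomputable def lformOrthogonal (n : ℕ) (W : Submodule ℂ ((Fin n → ℂ) × (Fin n → ℂ))) :
    Submodule ℂ ((Fin n → ℂ) × (Fin n → ℂ)) :=
  (symplecticForm n).orthogonal (W.map (starLinearEquiv ℂ).toLinearMap)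

section lformOrthogonal

variable {x : (Fin n → ℂ) × (Fin n → ℂ)} {U W W' : Submodule ℂ ((Fin n → ℂ) × (Fin n → ℂ))}

lemma mem_lformOrthogonal : x ∈ lformOrthogonal n W ↔ ∀ y ∈ W, lform n x y = 0 := by
  simp only [lformOrthogonal, LinearMap.BilinForm.mem_orthogonal_iff, Submodule.mem_map,
    forall_exists_index, and_imp, forall_apply_eq_imp_iff₂, lform_eq_symplecticForm]
  exact forall₂_congr fun y _ => symplecticForm_isAlt.isRefl.eq_iff

lemma finrank_lformOrthogonal_add_finrank (W : Submodule ℂ ((Fin n → ℂ) × (Fin n → ℂ))) :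
    finrank ℂ (lformOrthogonal n W) + finrank ℂ W = 2 * n := by
  have hle := W.finrank_le
  simp only [finrank_prod, finrank_fin_fun] at hle
  rw [lformOrthogonal, LinearMap.BilinForm.finrank_orthogonal symplecticForm_nondegenerate,
    finrank_map_starLinearEquiv, finrank_prod, finrank_fin_fun]
  omega

lemma lformOrthogonal_anti (h : W ≤ W') : lformOrthogonal n W' ≤ lformOrthogonal n W :=
  fun _ hx => mem_lformOrthogonal.2 fun y hy => mem_lformOrthogonal.1 hx y (h hy)

lemma le_lformOrthogonal_comm : U ≤ lformOrthogonal n W ↔ W ≤ lformOrthogonal n U := by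
  have key : ∀ U W : Submodule ℂ ((Fin n → ℂ) × (Fin n → ℂ)),
      U ≤ lformOrthogonal n W → W ≤ lformOrthogonal n U := fun U W h y hy =>
    mem_lformOrthogonal.2 fun x hx => by
      rw [lform_comm, mem_lformOrthogonal.1 (h hx) y hy, star_zero]
  exact ⟨key U W, key W U⟩

lemma lformOrthogonal_sup :
    lformOrthogonal n (W ⊔ W') = lformOrthogonal n W ⊓ lformOrthogonal n W' :=
  eq_of_forall_le_iff fun U => by
    rw [le_lformOrthogonal_comm, sup_le_iff, le_inf_iff, @le_lformOrthogonal_comm _ U W,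
      @le_lformOrthogonal_comm _ U W']

end lformOrthogonal

section IsLagrange

variable {θ P : Submodule ℂ ((Fin n → ℂ) × (Fin n → ℂ))}

lemma isNeutral_iff_le_lformOrthogonal :
    (∀ x ∈ P, ∀ y ∈ P, lform n x y = 0) ↔ P ≤ lformOrthogonal n P :=
  forall₂_congr fun _ _ => mem_lformOrthogonal.symm

lemma IsLagrange.le_lformOrthogonal (hθ : IsLagrange n θ) : θ ≤ lformOrthogonal n θ :=
  isNeutral_iff_le_lformOrthogonal.1 hθ.1

lemma IsLagrange.lformOrthogonal_eq (hθ : IsLagrange n θ) : lformOrthogonal n θ = θ := by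
  refine (Submodule.eq_of_le_of_finrank_le hθ.le_lformOrthogonal ?_).symm
  have := finrank_lformOrthogonal_add_finrank θ
  have := hθ.2
  omega

lemma IsLagrange.finrank_inf_lformOrthogonal_add (hθ : IsLagrange n θ) (P) :
    finrank ℂ ↥(θ ⊓ lformOrthogonal n P) + finrank ℂ P = n + finrank ℂ ↥(θ ⊓ P) := by
  have hsup := finrank_lformOrthogonal_add_finrank (θ ⊔ P)
  rw [lformOrthogonal_sup, hθ.lformOrthogonal_eq] at hsup
  have := Submodule.finrank_sup_add_finrank_inf_eq θ P
  rw [hθ.2] at this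
  omega

lemma inf_sup_inf_lformOrthogonal (hP : P ≤ lformOrthogonal n P) :
    θ ⊓ (P ⊔ θ ⊓ lformOrthogonal n P) = θ ⊓ lformOrthogonal n P := by
  rw [← inf_sup_assoc_of_le P inf_le_left]
  exact sup_eq_right.2 (inf_le_inf_left θ hP)

lemma IsLagrange.sup_inf_lformOrthogonal (hθ : IsLagrange n θ) (hP : P ≤ lformOrthogonal n P) :
    IsLagrange n (P ⊔ θ ⊓ lformOrthogonal n P) := by
  have hdim := hθ.finrank_inf_lformOrthogonal_add P
  set Q := θ ⊓ lformOrthogonal n P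
  refine ⟨isNeutral_iff_le_lformOrthogonal.2 ?_, ?_⟩
  · have hQ : Q ≤ lformOrthogonal n Q :=
      calc Q ≤ θ := inf_le_left
        _ = lformOrthogonal n θ := hθ.lformOrthogonal_eq.symm
        _ ≤ lformOrthogonal n Q := lformOrthogonal_anti inf_le_left
    rw [lformOrthogonal_sup]
    exact sup_le (le_inf hP (le_lformOrthogonal_comm.1 inf_le_right)) (le_inf inf_le_right hQ)
  · have hPQ : P ⊓ Q = θ ⊓ P := by
      rw [inf_left_comm, inf_eq_left.2 hP]
    have := Submodule.finrank_sup_add_finrank_inf_eq P Q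
    rw [hPQ] at this
    omega

end IsLagrange

end Lagrange

theorem stmt13 (n : ℕ) (θ θ₀ P : Submodule ℂ ((Fin n → ℂ) × (Fin n → ℂ)))
    (hθ : IsLagrange n θ) (hθ₀ : IsLagrange n θ₀)
    (h1 : θ ⊓ θ₀ ≤ P) (h2 : P ≤ θ₀) :
    ∃ θ' : Submodule ℂ ((Fin n → ℂ) × (Fin n → ℂ)), IsLagrange n θ' ∧ θ' ⊓ θ₀ = P ∧
      Module.finrank ℂ θ - Module.finrank ℂ ↥(θ ⊓ θ') =
        Module.finrank ℂ P - Module.finrank ℂ ↥(θ ⊓ θ₀) := by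
  have hP : P ≤ lformOrthogonal n P :=
    h2.trans (hθ₀.le_lformOrthogonal.trans (lformOrthogonal_anti h2))
  have hθP : θ ⊓ P = θ ⊓ θ₀ := le_antisymm (inf_le_inf_left θ h2) (le_inf inf_le_left h1)
  refine ⟨P ⊔ θ ⊓ lformOrthogonal n P, hθ.sup_inf_lformOrthogonal hP, ?_, ?_⟩
  · rw [sup_inf_assoc_of_le _ h2, sup_eq_left]
    exact (inf_le_inf_right θ₀ inf_le_left).trans h1
  · rw [inf_sup_inf_lformOrthogonal hP, hθ.2, ← hθP]
    have := hθ.finrank_inf_lformOrthogonal_add P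
    omega
end

section
/- Let ν and σ be positive Borel measures on ℝ and X ⊆ ℝ a Borel set such that the symmetric derivative (dν/dσ)(x) exists and lies in (0, ∞) for all x ∈ X. Then the restricted measures 1_X·ν and 1_X·σ are mutually absolutely continuous. -/
/-!
Where the symmetric derivative lies in `(0, ∞)`, the measures of small balls centred at `x` are
finite and each is at most a constant times the other. Stratifying `X` by that constant and by the
radius below which the bound holds yields countably many pieces with uniform domination, and on
such a piece the Besicovitch covering theorem turns the bound on balls into `ν A ≤ C * σ A` for
all subsets `A`. Hence `σ`-null subsets of `X` are `ν`-null, and the roles of `ν` and `σ` are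
symmetric because the ratio `σ / ν` tends to `c⁻¹`.
-/

open MeasureTheory

open Set Filter Metric Topology
open scoped NNReal ENNReal

namespace ENNReal

variable {ι : Type*} {l : Filter ι} {f g : ι → ℝ≥0∞} {c : ℝ≥0∞}

lemma exists_eventually_le_mul_of_tendsto_div (hfg : Tendsto (fun i ↦ f i / g i) l (𝓝 c))
    (hc0 : c ≠ 0) (hctop : c ≠ ∞) : ∃ C : ℝ≥0, ∀ᶠ i in l, f i ≤ C * g i ∧ g i < ∞ := by
  obtain ⟨C, hcC, -⟩ := lt_iff_exists_nnreal_btwn.1 hctop.lt_top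
  refine ⟨C, ?_⟩
  filter_upwards [hfg.eventually_ne hc0, hfg.eventually (gt_mem_nhds hcC)] with i hne hlt
  have hg : g i ≠ ∞ := (ENNReal.div_ne_zero.1 hne).2
  exact ⟨(ENNReal.div_le_iff_le_mul (.inr coe_ne_top) (.inl hg)).1 hlt.le, hg.lt_top⟩

lemma tendsto_div_swap (hfg : Tendsto (fun i ↦ f i / g i) l (𝓝 c)) (hc0 : c ≠ 0) :
    Tendsto (fun i ↦ g i / f i) l (𝓝 c⁻¹) := by
  refine hfg.inv.congr' ?_
  filter_upwards [hfg.eventually_ne hc0] with i hne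
  obtain ⟨hf, hg⟩ := ENNReal.div_ne_zero.1 hne
  exact ENNReal.inv_div (.inl hg) (.inr hf)

end ENNReal

section Besicovitch

variable {α : Type*} [MetricSpace α] [SecondCountableTopology α] [MeasurableSpace α]
  [BorelSpace α] [HasBesicovitchCovering α] {ν σ : Measure α}

lemma measure_le_mul_of_frequently_closedBall_le [IsLocallyFiniteMeasure ν]
    [IsLocallyFiniteMeasure σ] (C : ℝ≥0) (s : Set α)
    (h : ∀ x ∈ s, ∃ᶠ ε in 𝓝[>] 0, ν (closedBall x ε) ≤ C * σ (closedBall x ε)) :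
    ν s ≤ C * σ s :=
  (Besicovitch.vitaliFamily (ν + σ)).measure_le_of_frequently_le (C • σ)
    (Measure.absolutelyContinuous_of_le (Measure.le_add_right le_rfl)) s
    fun x hx ↦ (Besicovitch.tendsto_filterAt (ν + σ) x).frequently (h x hx)

lemma measure_eq_zero_of_forall_closedBall_le {C : ℝ≥0} {r : ℝ} (hr : 0 < r) {s : Set α}
    (h : ∀ x ∈ s, ∀ ε ∈ Ioo 0 r, ν (closedBall x ε) ≤ C * σ (closedBall x ε) ∧
      σ (closedBall x ε) < ∞)
    (hσ : σ s = 0) : ν s = 0 := by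
  refine measure_null_of_locally_null s fun x hx ↦ ?_
  -- Restricted to `I`, both measures are finite, as the Besicovitch comparison requires.
  set I := closedBall x (r / 2)
  obtain ⟨hνI, hσI⟩ := h x hx (r / 2) ⟨by positivity, by linarith⟩
  have : IsFiniteMeasure (σ.restrict I) := isFiniteMeasure_restrict.2 hσI.ne
  have : IsFiniteMeasure (ν.restrict I) :=
    isFiniteMeasure_restrict.2 (hνI.trans_lt (ENNReal.mul_lt_top ENNReal.coe_lt_top hσI)).ne
  have hsub : ∀ y ∈ ball x (r / 4), ∀ ε ≤ r / 4, closedBall y ε ⊆ I := fun y hy ε hε ↦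
    closedBall_subset_closedBall' (by linarith [mem_ball.1 hy])
  refine ⟨s ∩ ball x (r / 4), inter_mem_nhdsWithin s (ball_mem_nhds x (by positivity)), ?_⟩
  have hle := measure_le_mul_of_frequently_closedBall_le (ν := ν.restrict I)
    (σ := σ.restrict I) C (s ∩ ball x (r / 4)) fun y hy ↦ by
      refine Eventually.frequently ?_
      filter_upwards [Ioo_mem_nhdsGT (show (0 : ℝ) < r / 4 by positivity)] with ε hε
      rw [Measure.restrict_eq_self _ (hsub y hy.2 ε hε.2.le),
        Measure.restrict_eq_self _ (hsub y hy.2 ε hε.2.le)]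
      exact (h y hy.1 ε ⟨hε.1, by linarith [hε.2]⟩).1
  have hsI : s ∩ ball x (r / 4) ⊆ I := inter_subset_right.trans
    (ball_subset_closedBall.trans (closedBall_subset_closedBall (by linarith)))
  rwa [Measure.restrict_eq_self _ hsI, Measure.restrict_eq_self _ hsI,
    measure_mono_null inter_subset_left hσ, mul_zero, nonpos_iff_eq_zero] at hle

lemma measure_eq_zero_of_forall_eventually_closedBall_le {s : Set α}
    (h : ∀ x ∈ s, ∃ C : ℝ≥0, ∀ᶠ ε in 𝓝[>] 0,
      ν (closedBall x ε) ≤ C * σ (closedBall x ε) ∧ σ (closedBall x ε) < ∞)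
    (hσ : σ s = 0) : ν s = 0 := by
  let Z : ℕ × ℕ → Set α := fun p ↦ {x ∈ s | ∀ ε ∈ Ioo 0 (1 / (p.2 + 1 : ℝ)),
    ν (closedBall x ε) ≤ (p.1 : ℝ≥0) * σ (closedBall x ε) ∧ σ (closedBall x ε) < ∞}
  have hcover : s ⊆ ⋃ p, Z p := by
    intro x hx
    obtain ⟨C, hC⟩ := h x hx
    obtain ⟨δ, hδ, hδC⟩ := mem_nhdsGT_iff_exists_Ioo_subset.1 hC
    obtain ⟨m, hm⟩ := exists_nat_one_div_lt (mem_Ioi.1 hδ)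
    refine mem_iUnion.2 ⟨(⌈C⌉₊, m), hx, fun ε hε ↦ ?_⟩
    obtain ⟨hle, hfin⟩ := hδC ⟨hε.1, hε.2.trans hm⟩
    refine ⟨hle.trans ?_, hfin⟩
    gcongr
    exact_mod_cast Nat.le_ceil C
  refine measure_mono_null hcover (measure_iUnion_null fun p ↦ ?_)
  exact measure_eq_zero_of_forall_closedBall_le (by positivity) (fun x hx ↦ hx.2)
    (measure_mono_null (sep_subset _ _) hσ)

lemma absolutelyContinuous_restrict_of_forall_eventually_closedBall_le (X : Set α)
    (h : ∀ x ∈ X, ∃ C : ℝ≥0, ∀ᶠ ε in 𝓝[>] 0,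
      ν (closedBall x ε) ≤ C * σ (closedBall x ε) ∧ σ (closedBall x ε) < ∞) :
    ν.restrict X ≪ σ.restrict X :=
  Measure.AbsolutelyContinuous.mk fun s hs hσ ↦ by
    rw [Measure.restrict_apply hs] at hσ ⊢
    exact measure_eq_zero_of_forall_eventually_closedBall_le (fun x hx ↦ h x hx.2) hσ

end Besicovitch

theorem stmt19_general (ν σ : Measure ℝ) (X : Set ℝ)
    (h : ∀ x ∈ X, ∃ c : ENNReal, 0 < c ∧ c < ⊤ ∧
      Filter.Tendsto
        (fun ε : ℝ => ν (Set.Icc (x - ε) (x + ε)) / σ (Set.Icc (x - ε) (x + ε)))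
        (nhdsWithin 0 (Set.Ioi 0)) (nhds c)) :
    ν.restrict X ≪ σ.restrict X ∧ σ.restrict X ≪ ν.restrict X := by
  simp_rw [← Real.closedBall_eq_Icc] at h
  refine ⟨absolutelyContinuous_restrict_of_forall_eventually_closedBall_le X fun x hx ↦ ?_,
    absolutelyContinuous_restrict_of_forall_eventually_closedBall_le X fun x hx ↦ ?_⟩ <;>
    obtain ⟨c, hc0, hctop, hc⟩ := h x hx
  · exact ENNReal.exists_eventually_le_mul_of_tendsto_div hc hc0.ne' hctop.ne
  · exact ENNReal.exists_eventually_le_mul_of_tendsto_div (ENNReal.tendsto_div_swap hc hc0.ne')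
      (ENNReal.inv_ne_zero.2 hctop.ne) (ENNReal.inv_ne_top.2 hc0.ne')

theorem stmt19 (ν σ : Measure ℝ) (X : Set ℝ) (hX : MeasurableSet X)
    (h : ∀ x ∈ X, ∃ c : ENNReal, 0 < c ∧ c < ⊤ ∧
      Filter.Tendsto
        (fun ε : ℝ => ν (Set.Icc (x - ε) (x + ε)) / σ (Set.Icc (x - ε) (x + ε)))
        (nhdsWithin 0 (Set.Ioi 0)) (nhds c)) :
    ν.restrict X ≪ σ.restrict X ∧ σ.restrict X ≪ ν.restrict X :=
  stmt19_general ν σ X h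
end
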